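/- In the Banach algebra c of convergent complex sequences, for each k ∈ ℕ the maximal ideal M_k = {(xᵢ) ∈ c : x_k = 0} is singly generated (by the sequence with 0 in position k and 1 elsewhere), whereas the maximal ideal c₀ of null sequences is not finitely generated. -/

import Mathlib

noncomputable section

/-- A left ideal of an algebra `A`, encoded as a `ℂ`-submodule closed under
left multiplication by arbitrary elements of `A`. -/
def IsLeftIdeal {A : Type*} [NonUnitalNonAssocSemiring A] [Module ℂ A]
    (I : Submodule ℂ A) : Prop :=
  ∀ a : A, ∀ x ∈ I, a * x ∈ I

/-- The left ideal generated by a set `S` (equivalently `⟨S⟩ = A♯·S`). -/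
def leftIdealGen {A : Type*} [NonUnitalNonAssocSemiring A] [Module ℂ A]
    (S : Set A) : Submodule ℂ A :=
  sInf {I : Submodule ℂ A | IsLeftIdeal I ∧ S ⊆ ↑I}

/-- A left ideal is finitely generated if it is generated by a finite subset of itself. -/
def IsFGLeftIdeal {A : Type*} [NonUnitalNonAssocSemiring A] [Module ℂ A]
    (I : Submodule ℂ A) : Prop :=
  ∃ S : Finset A, ↑S ⊆ (I : Set A) ∧ leftIdealGen (↑S : Set A) = I

/-- A left ideal is countably generated if it is generated by a countable subset of itself. -/
def IsCGLeftIdeal {A : Type*} [NonUnitalNonAssocSemiring A] [Module ℂ A]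
    (I : Submodule ℂ A) : Prop :=
  ∃ S : Set A, S.Countable ∧ S ⊆ (I : Set A) ∧ leftIdealGen S = I

/-- Membership in `𝔐∞(A)`: a maximal element of the family of
non-finitely-generated left ideals. -/
def IsMaxNonFG {A : Type*} [NonUnitalNonAssocSemiring A] [Module ℂ A]
    (M : Submodule ℂ A) : Prop :=
  IsLeftIdeal M ∧ ¬ IsFGLeftIdeal M ∧
    ∀ J : Submodule ℂ A, IsLeftIdeal J → ¬ IsFGLeftIdeal J → M ≤ J → J = M

/-- Membership in `𝔑∞(A)`: a maximal element of the family of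
non-countably-generated left ideals. -/
def IsMaxNonCG {A : Type*} [NonUnitalNonAssocSemiring A] [Module ℂ A]
    (M : Submodule ℂ A) : Prop :=
  IsLeftIdeal M ∧ ¬ IsCGLeftIdeal M ∧
    ∀ J : Submodule ℂ A, IsLeftIdeal J → ¬ IsCGLeftIdeal J → M ≤ J → J = M

/-- `M` is a maximal left ideal. -/
def IsMaxLeftIdeal {A : Type*} [NonUnitalNonAssocSemiring A] [Module ℂ A]
    (M : Submodule ℂ A) : Prop :=
  IsLeftIdeal M ∧ M ≠ ⊤ ∧ ∀ J : Submodule ℂ A, IsLeftIdeal J → M < J → J = ⊤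

open Filter Topology

set_option synthInstance.maxHeartbeats 1000000
set_option maxHeartbeats 1000000

/-- The algebra `c` of convergent complex sequences, as a subalgebra of `ℕ → ℂ`. -/
def convSeq : Subalgebra ℂ (ℕ → ℂ) where
  carrier := {f : ℕ → ℂ | ∃ l : ℂ, Tendsto f atTop (𝓝 l)}
  mul_mem' := by rintro f g ⟨l, hl⟩ ⟨m, hm⟩; exact ⟨l * m, hl.mul hm⟩
  add_mem' := by rintro f g ⟨l, hl⟩ ⟨m, hm⟩; exact ⟨l + m, hl.add hm⟩
  algebraMap_mem' := fun c => ⟨c, tendsto_const_nhds⟩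

/-- The maximal ideal `M_k = {x ∈ c : x_k = 0}`. -/
def Mk (k : ℕ) : Submodule ℂ convSeq where
  carrier := {f : convSeq | (f : ℕ → ℂ) k = 0}
  zero_mem' := rfl
  add_mem' := by intro f g hf hg; simp_all [Set.mem_setOf_eq]
  smul_mem' := by intro c f hf; simp_all [Set.mem_setOf_eq]

/-- The maximal ideal `c₀` of null sequences. -/
def nullIdeal : Submodule ℂ convSeq where
  carrier := {f : convSeq | Tendsto (f : ℕ → ℂ) atTop (𝓝 0)}
  zero_mem' := tendsto_const_nhds
  add_mem' := by
    intro f g hf hg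
    have h := Tendsto.add (f := (f : ℕ → ℂ)) (g := (g : ℕ → ℂ)) hf hg
    rw [add_zero] at h
    exact h
  smul_mem' := by
    intro c f hf
    have h := Tendsto.const_smul (f := (f : ℕ → ℂ)) (M := ℂ) hf c
    rw [smul_zero] at h
    exact h

/-- The sequence with `0` in position `k` and `1` elsewhere, as an element of `c`. -/
def genSeq (k : ℕ) : convSeq :=
  ⟨fun i => if i = k then 0 else 1, 1, by
    refine Tendsto.congr' ?_
      (tendsto_const_nhds : Tendsto (fun _ : ℕ => (1 : ℂ)) atTop (𝓝 1))
    filter_upwards [eventually_gt_atTop k] with i hi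
    simp [hi.ne']⟩

/-! Each `f ∈ M_k` factors as `f = f · e_k` with `e_k` the generator. For `c₀`, any finitely
many generators `s` are dominated by the single null sequence `m = ∑ |s|`, hence so is the whole
ideal they generate (convergent sequences are bounded); but no null sequence `m` dominates all of
`c₀`: `g = √(|m| + 1/(n+1))` tends to zero, yet `g ≤ C·m ≤ |C|·g²` would force `1 ≤ |C|·g`. -/

section LeftIdeal

variable {A : Type*} [NonUnitalNonAssocSemiring A] [Module ℂ A]

theorem leftIdealGen_le {S : Set A} {I : Submodule ℂ A} (hI : IsLeftIdeal I) (hS : S ⊆ I) :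
    leftIdealGen S ≤ I :=
  sInf_le ⟨hI, hS⟩

theorem mul_mem_leftIdealGen {S : Set A} (a : A) {s : A} (hs : s ∈ S) :
    a * s ∈ leftIdealGen S :=
  Submodule.mem_sInf.2 fun _ ⟨hI, hSI⟩ => hI a s (hSI hs)

end LeftIdeal

theorem exists_tendsto_zero_forall_exists_mul_lt {m : ℕ → ℝ} (hm : Tendsto m atTop (𝓝 0)) :
    ∃ g : ℕ → ℝ, Tendsto g atTop (𝓝 0) ∧ ∀ C : ℝ, ∃ n, C * m n < g n := by
  set ε : ℕ → ℝ := fun n => |m n| + 1 / ((n : ℝ) + 1)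
  have hε_pos : ∀ n, 0 < ε n := fun n => by positivity
  have hε : Tendsto ε atTop (𝓝 0) := by
    simpa [ε] using hm.abs.add tendsto_one_div_add_atTop_nhds_zero_nat
  have hg : Tendsto (fun n => √(ε n)) atTop (𝓝 0) := by
    simpa using hε.sqrt
  refine ⟨fun n => √(ε n), hg, fun C => ?_⟩
  obtain ⟨n, hn⟩ : ∃ n, |C| * √(ε n) < 1 :=
    ((hg.const_mul |C|).eventually (gt_mem_nhds (by simp))).exists
  refine ⟨n, lt_of_not_ge fun hle => ?_⟩
  have : √(ε n) < √(ε n) :=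
    calc √(ε n) ≤ C * m n := hle
      _ ≤ |C| * |m n| := by rw [← abs_mul]; exact le_abs_self _
      _ ≤ |C| * ε n := by gcongr; exact le_add_of_nonneg_right (by positivity)
      _ = (|C| * √(ε n)) * √(ε n) := by rw [mul_assoc, Real.mul_self_sqrt (hε_pos n).le]
      _ < 1 * √(ε n) := by gcongr
      _ = √(ε n) := one_mul _
  exact lt_irrefl _ this

theorem Mk_isLeftIdeal (k : ℕ) : IsLeftIdeal (Mk k) := fun a f (hf : (f : ℕ → ℂ) k = 0) =>
  show (a : ℕ → ℂ) k * (f : ℕ → ℂ) k = 0 by rw [hf, mul_zero]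

theorem genSeq_mem_Mk (k : ℕ) : genSeq k ∈ Mk k :=
  show (if k = k then (0 : ℂ) else 1) = 0 from if_pos rfl

theorem mul_genSeq_of_mem_Mk {k : ℕ} {f : convSeq} (hf : f ∈ Mk k) : f * genSeq k = f := by
  ext i
  by_cases hik : i = k
  · subst hik
    simpa [genSeq] using hf.symm
  · simp [genSeq, hik]

theorem Mk_eq_leftIdealGen_genSeq (k : ℕ) : Mk k = leftIdealGen {genSeq k} :=
  le_antisymm
    (fun f hf => mul_genSeq_of_mem_Mk hf ▸ mul_mem_leftIdealGen f rfl)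
    (leftIdealGen_le (Mk_isLeftIdeal k) (Set.singleton_subset_iff.2 (genSeq_mem_Mk k)))

def dominatedIdeal (m : ℕ → ℝ) : Submodule ℂ convSeq where
  carrier := {f | ∃ C : ℝ, ∀ n, ‖(f : ℕ → ℂ) n‖ ≤ C * m n}
  zero_mem' := ⟨0, by simp⟩
  add_mem' := by
    rintro f g ⟨C, hC⟩ ⟨D, hD⟩
    refine ⟨C + D, fun n => ?_⟩
    calc ‖(f : ℕ → ℂ) n + (g : ℕ → ℂ) n‖ ≤ ‖(f : ℕ → ℂ) n‖ + ‖(g : ℕ → ℂ) n‖ := norm_add_le _ _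
      _ ≤ (C + D) * m n := by linarith [hC n, hD n]
  smul_mem' := by
    rintro c f ⟨C, hC⟩
    refine ⟨‖c‖ * C, fun n => ?_⟩
    simpa [mul_assoc] using mul_le_mul_of_nonneg_left (hC n) (norm_nonneg c)

theorem dominatedIdeal_isLeftIdeal (m : ℕ → ℝ) : IsLeftIdeal (dominatedIdeal m) := by
  rintro a f ⟨C, hC⟩
  obtain ⟨l, hl⟩ := a.2
  obtain ⟨B, hB⟩ := hl.norm.bddAbove_range
  refine ⟨B * C, fun n => ?_⟩
  have haB : ‖(a : ℕ → ℂ) n‖ ≤ B := hB ⟨n, rfl⟩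
  calc ‖(a : ℕ → ℂ) n * (f : ℕ → ℂ) n‖ = ‖(a : ℕ → ℂ) n‖ * ‖(f : ℕ → ℂ) n‖ := norm_mul _ _
    _ ≤ B * (C * m n) := mul_le_mul haB (hC n) (norm_nonneg _) ((norm_nonneg _).trans haB)
    _ = B * C * m n := (mul_assoc _ _ _).symm

theorem leftIdealGen_le_dominatedIdeal_sum_norm (S : Finset convSeq) :
    leftIdealGen (S : Set convSeq) ≤ dominatedIdeal fun n => ∑ s ∈ S, ‖(s : ℕ → ℂ) n‖ :=
  leftIdealGen_le (dominatedIdeal_isLeftIdeal _) fun s hs =>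
    ⟨1, fun n => by
      rw [one_mul]
      exact Finset.single_le_sum (f := fun t : convSeq => ‖(t : ℕ → ℂ) n‖)
        (fun _ _ => norm_nonneg _) hs⟩

theorem tendsto_sum_norm_of_subset_nullIdeal {S : Finset convSeq}
    (hS : (S : Set convSeq) ⊆ nullIdeal) :
    Tendsto (fun n => ∑ s ∈ S, ‖(s : ℕ → ℂ) n‖) atTop (𝓝 0) := by
  simpa using tendsto_finsetSum S fun s hs => (hS hs : Tendsto (s : ℕ → ℂ) atTop (𝓝 0)).norm

theorem not_nullIdeal_le_dominatedIdeal {m : ℕ → ℝ} (hm : Tendsto m atTop (𝓝 0)) :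
    ¬ nullIdeal ≤ dominatedIdeal m := by
  intro hle
  obtain ⟨g, hg, hgm⟩ := exists_tendsto_zero_forall_exists_mul_lt hm
  have hg' : Tendsto (fun n => (g n : ℂ)) atTop (𝓝 0) := by
    simpa using hg.ofReal
  obtain ⟨C, hC⟩ := hle (show (⟨_, 0, hg'⟩ : convSeq) ∈ nullIdeal from hg')
  obtain ⟨n, hn⟩ := hgm C
  have : g n ≤ C * m n := (Real.le_norm_self (g n)).trans (by simpa using hC n)
  exact hn.not_ge this

/-- In the Banach algebra `c` of convergent complex sequences, each
maximal ideal `M_k` is singly generated (by the sequence with `0` in position `k` and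
`1` elsewhere), whereas the maximal ideal `c₀` of null sequences is not finitely
generated. -/
theorem convSeq_maximal_ideals :
    (∀ k : ℕ, Mk k = leftIdealGen ({genSeq k} : Set convSeq)) ∧
      ¬ IsFGLeftIdeal nullIdeal := by
  refine ⟨Mk_eq_leftIdealGen_genSeq, ?_⟩
  rintro ⟨S, hS, hgen⟩
  exact not_nullIdeal_le_dominatedIdeal (tendsto_sum_norm_of_subset_nullIdeal hS)
    (hgen ▸ leftIdealGen_le_dominatedIdeal_sum_norm S)
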